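/- The sequence n ↦ X_n/(2n−1)!! converges to a limit C as n → ∞, and moreover C > 0. -/

import Mathlib

/-!
Symmetrising the weights `j - 1 ↔ n - j - 1` turns the recurrence into
`2 X_n = 4 (n-1) X_{n-1} + (n-2) ∑_{j=2}^{n-2} X_j X_{n-j}`.
Comparing these convolutions for consecutive `n` gives `X_{n+1} ≥ (2n+1) X_n` for `n ≥ 5`, so
`a_n = X_n / (2n-1)!!` is eventually nondecreasing. Conversely, the ratio bound
`X_{k+1} ≤ (2k+4) X_k` (proved by strong induction) makes `X_j X_{n-j}` decrease towards the
middle up to a factor `2`, so all but the outer terms of the convolution are `O(X_{n-4})`; this yields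
`X_{n+2} ≤ (2n+3) X_{n+1} + 34 X_n`, i.e. `a_{n+1} ≤ (1 + 34/n²) a_n`. Hence `(a_n)` is bounded by a
convergent product, and being eventually nondecreasing it converges to a limit `≥ a_7 > 0`.
-/

/-- The sequence `X_n` counting equivalence classes of circular planar electrical networks:
`X_1 = 1` and, for `n ≥ 2`,
`X_n = 2(n-1) X_{n-1} + ∑_{j=2}^{n-2} (j-1) X_j X_{n-j}` (the sum being empty for `n ≤ 3`;
here it is written over the attached index set to establish termination). -/
def X : ℕ → ℕ
  | 0 => 1
  | 1 => 1
  | n + 2 =>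
      2 * (n + 1) * X (n + 1) +
        ∑ j ∈ (Finset.Icc 2 n).attach, (j.1 - 1) * X j.1 * X (n + 2 - j.1)
decreasing_by
  · exact Nat.lt_succ_self (n + 1)
  · have := j.2; rw [Finset.mem_Icc] at this; omega
  · have := j.2; rw [Finset.mem_Icc] at this; omega

open Finset

theorem two_mul_sum_antidiagonal_succ_mul {R : Type*} [CommSemiring R] (g : ℕ → R) (n : ℕ) :
    2 * ∑ p ∈ antidiagonal n, ((p.1 : R) + 1) * g p.1 * g p.2 =
      ((n : R) + 2) * ∑ p ∈ antidiagonal n, g p.1 * g p.2 := by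
  conv_lhs => rw [two_mul]; enter [2]; rw [← Nat.sum_antidiagonal_swap]
  rw [← sum_add_distrib, mul_sum]
  refine sum_congr rfl fun p hp => ?_
  have : (p.1 : R) + p.2 = n := by rw [← Nat.cast_add, mem_antidiagonal.1 hp]
  simp only [Prod.fst_swap, Prod.snd_swap]
  rw [← this]; ring

theorem le_mul_exp_tsum_of_le_one_add_mul {u ε : ℕ → ℝ} {N : ℕ} (hε : Summable ε)
    (hε0 : ∀ n, 0 ≤ ε n) (hN : 0 ≤ u N) (hu : ∀ n ≥ N, u (n + 1) ≤ (1 + ε n) * u n) :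
    ∀ n ≥ N, u n ≤ u N * Real.exp (∑' k, ε k) := by
  have hpartial : ∀ n ≥ N, u n ≤ u N * Real.exp (∑ k ∈ Ico N n, ε k) := by
    intro n hn
    induction n, hn using Nat.le_induction with
    | base => simp
    | succ n hn ih =>
      calc u (n + 1) ≤ (1 + ε n) * u n := hu n hn
        _ ≤ (1 + ε n) * (u N * Real.exp (∑ k ∈ Ico N n, ε k)) :=
          mul_le_mul_of_nonneg_left ih (by linarith [hε0 n])
        _ ≤ Real.exp (ε n) * (u N * Real.exp (∑ k ∈ Ico N n, ε k)) :=
          mul_le_mul_of_nonneg_right (by linarith [Real.add_one_le_exp (ε n)])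
            (mul_nonneg hN (Real.exp_pos _).le)
        _ = u N * Real.exp (∑ k ∈ Ico N (n + 1), ε k) := by
          rw [sum_Ico_succ_top hn, Real.exp_add]; ring
  intro n hn
  refine (hpartial n hn).trans (mul_le_mul_of_nonneg_left ?_ hN)
  exact Real.exp_le_exp.2 (hε.sum_le_tsum _ fun k _ => hε0 k)

theorem doubleFactorial_two_mul_succ_sub_one (n : ℕ) :
    Nat.doubleFactorial (2 * (n + 1) - 1) = (2 * n + 1) * Nat.doubleFactorial (2 * n - 1) := by
  rw [show 2 * (n + 1) - 1 = 2 * n + 1 by omega, Nat.doubleFactorial_add_one]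

theorem X_add_two (n : ℕ) :
    X (n + 2) = 2 * (n + 1) * X (n + 1) + ∑ j ∈ Icc 2 n, (j - 1) * X j * X (n + 2 - j) := by
  rw [X, sum_attach (Icc 2 n) (fun j => (j - 1) * X j * X (n + 2 - j))]

theorem X_two : X 2 = 2 := by simp [X_add_two, X]

theorem X_three : X 3 = 8 := by simp [X_add_two, X]

theorem X_four : X 4 = 52 := by simp [X_add_two, X]

theorem two_mul_mul_X_le_X_succ (n : ℕ) : 2 * n * X n ≤ X (n + 1) := by
  cases n with
  | zero => simp
  | succ n => rw [X_add_two]; exact Nat.le_add_right _ _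

theorem two_mul_X_le_X_succ {n : ℕ} (hn : 1 ≤ n) : 2 * X n ≤ X (n + 1) :=
  le_trans (Nat.mul_le_mul_right _ (by omega)) (two_mul_mul_X_le_X_succ n)

theorem X_pos : ∀ n, 0 < X n
  | 0 => by simp [X]
  | 1 => by simp [X]
  | n + 2 => lt_of_lt_of_le (by have := X_pos (n + 1); omega) (two_mul_X_le_X_succ (by omega))

theorem X_add_four (n : ℕ) :
    X (n + 4) = 2 * (n + 3) * X (n + 3) +
      ∑ p ∈ antidiagonal n, (p.1 + 1) * X (p.1 + 2) * X (p.2 + 2) := by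
  rw [X_add_two, Nat.sum_antidiagonal_eq_sum_range_succ_mk, ← Ico_add_one_right_eq_Icc,
    sum_Ico_eq_sum_range]
  refine congrArg₂ _ rfl (sum_congr (by congr 1) fun k hk => ?_)
  have := mem_range.1 hk
  dsimp only
  rw [show 2 + k - 1 = k + 1 by omega, show n + 2 + 2 - (2 + k) = n - k + 2 by omega, add_comm 2 k]

def convX (s n : ℕ) : ℕ := ∑ p ∈ antidiagonal n, X (p.1 + s) * X (p.2 + s)

theorem two_mul_X_add_four (n : ℕ) :
    2 * X (n + 4) = 4 * (n + 3) * X (n + 3) + (n + 2) * convX 2 n := by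
  have h := two_mul_sum_antidiagonal_succ_mul (fun k => X (k + 2)) n
  simp only [Nat.cast_id] at h
  rw [X_add_four, mul_add, h, convX]; ring

theorem convX_add_two (s n : ℕ) :
    convX s (n + 2) = 2 * X s * X (n + s + 2) + convX (s + 1) n := by
  rw [convX, Nat.sum_antidiagonal_succ, Nat.sum_antidiagonal_succ', convX]
  simp only [zero_add]
  rw [show n + 1 + 1 + s = n + s + 2 by ring]
  ring_nf

theorem convX_two_succ_le_convX_three (n : ℕ) : convX 2 (n + 1) ≤ convX 3 n := by
  set T := ∑ p ∈ antidiagonal n, X (p.1 + 3) * X (p.2 + 2)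
  have hsplit : convX 2 (n + 1) = X 2 * X (n + 3) + T := by
    rw [convX, Nat.sum_antidiagonal_succ]
  have hcorner : X (n + 3) * X 2 ≤ T :=
    single_le_sum (f := fun p => X (p.1 + 3) * X (p.2 + 2)) (fun _ _ => Nat.zero_le _)
      (show (n, 0) ∈ antidiagonal n from mem_antidiagonal.2 (add_zero n))
  have hdouble : 2 * T ≤ convX 3 n := by
    rw [mul_sum]
    refine sum_le_sum fun p _ => ?_
    calc 2 * (X (p.1 + 3) * X (p.2 + 2)) = X (p.1 + 3) * (2 * X (p.2 + 2)) := by ring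
      _ ≤ X (p.1 + 3) * X (p.2 + 3) := Nat.mul_le_mul_left _ (two_mul_X_le_X_succ (by omega))
  rw [hsplit]
  linarith [mul_comm (X 2) (X (n + 3))]

theorem two_mul_add_one_mul_X_le_X_succ {n : ℕ} (hn : 5 ≤ n) : (2 * n + 1) * X n ≤ X (n + 1) := by
  obtain ⟨m, rfl⟩ : ∃ m, n = m + 5 := ⟨n - 5, by omega⟩
  have hnext := two_mul_X_add_four (m + 2)
  have hcur := two_mul_X_add_four (m + 1)
  have hconv : 4 * X (m + 4) + convX 2 (m + 1) ≤ convX 2 (m + 2) := by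
    rw [convX_add_two, X_two, show m + 2 + 2 = m + 4 by ring]
    linarith [convX_two_succ_le_convX_three m]
  have hweight : (m + 3) * convX 2 (m + 1) ≤ (m + 4) * convX 2 (m + 1) :=
    Nat.mul_le_mul_right _ (by omega)
  have : 2 * X (m + 5) ≤ (m + 4) * convX 2 (m + 2) := by
    calc 2 * X (m + 5) ≤ (m + 4) * (4 * X (m + 4) + convX 2 (m + 1)) := by
          rw [hcur]; linarith
      _ ≤ (m + 4) * convX 2 (m + 2) := Nat.mul_le_mul_left _ hconv
  rw [show m + 5 + 1 = m + 2 + 4 by ring]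
  nlinarith

theorem X_succ_mul_X_le_X_mul_X_succ {a b : ℕ} (ha : X (a + 1) ≤ (2 * a + 4) * X a)
    (hab : a + 2 ≤ b) : X (a + 1) * X b ≤ X a * X (b + 1) :=
  calc X (a + 1) * X b ≤ (2 * a + 4) * X a * X b := Nat.mul_le_mul_right _ ha
    _ = X a * ((2 * a + 4) * X b) := by ring
    _ ≤ X a * (2 * b * X b) := by gcongr; omega
    _ ≤ X a * X (b + 1) := Nat.mul_le_mul_left _ (two_mul_mul_X_le_X_succ b)

theorem X_add_mul_X_le_X_mul_X_add {a b i : ℕ} (hU : ∀ k < a + i, X (k + 1) ≤ (2 * k + 4) * X k)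
    (h : a + i < b) : X (a + i) * X b ≤ X a * X (b + i) := by
  induction i generalizing b with
  | zero => rfl
  | succ i ih =>
    calc X (a + (i + 1)) * X b ≤ X (a + i) * X (b + 1) :=
          X_succ_mul_X_le_X_mul_X_succ (a := a + i) (hU (a + i) (by omega)) (by omega)
      _ ≤ X a * X (b + 1 + i) := ih (fun k hk => hU k (by omega)) (by omega)
      _ = X a * X (b + (i + 1)) := by rw [add_right_comm, add_assoc]

theorem X_succ_mul_self_le {a : ℕ} (ha : X (a + 1) ≤ (2 * a + 4) * X a) :
    X (a + 1) * X (a + 1) ≤ 2 * (X a * X (a + 2)) :=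
  calc X (a + 1) * X (a + 1) ≤ (2 * a + 4) * X a * X (a + 1) := Nat.mul_le_mul_right _ ha
    _ ≤ 2 * (2 * (a + 1)) * X a * X (a + 1) := by gcongr; omega
    _ = 2 * (X a * (2 * (a + 1) * X (a + 1))) := by ring
    _ ≤ 2 * (X a * X (a + 2)) :=
        Nat.mul_le_mul_left _ (Nat.mul_le_mul_left _ (two_mul_mul_X_le_X_succ (a + 1)))

theorem X_mul_X_le_of_mem_antidiagonal {s n : ℕ}
    (hU : ∀ k, 2 * k + 2 ≤ n + 2 * s → X (k + 1) ≤ (2 * k + 4) * X k) {p : ℕ × ℕ}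
    (hp : p ∈ antidiagonal n) : X (p.1 + s) * X (p.2 + s) ≤ 2 * (X s * X (n + s)) := by
  obtain ⟨i, j⟩ := p
  rw [HasAntidiagonal.mem_antidiagonal] at hp
  dsimp only
  wlog hij : i ≤ j generalizing i j
  · rw [mul_comm]; exact this j i (by omega) (by omega)
  rcases hij.lt_or_eq with hlt | rfl
  · have := X_add_mul_X_le_X_mul_X_add (a := s) (b := j + s) (i := i)
      (fun k hk => hU k (by omega)) (by omega)
    rw [add_comm s i, show j + s + i = n + s by omega] at this
    omega
  · cases i with
    | zero =>
      obtain rfl : n = 0 := by omega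
      simp only [zero_add]; omega
    | succ i =>
      have hmid := X_succ_mul_self_le (hU (i + s) (by omega))
      have hchain := X_add_mul_X_le_X_mul_X_add (a := s) (b := i + s + 2) (i := i)
        (fun k hk => hU k (by omega)) (by omega)
      rw [add_comm s i, show i + s + 2 + i = n + s by omega] at hchain
      rw [show i + 1 + s = i + s + 1 by ring]
      omega

theorem convX_le {s n : ℕ} (hU : ∀ k, 2 * k + 2 ≤ n + 2 * s → X (k + 1) ≤ (2 * k + 4) * X k) :
    convX s n ≤ (n + 1) * (2 * (X s * X (n + s))) := by
  calc convX s n ≤ (antidiagonal n).card • (2 * (X s * X (n + s))) :=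
        sum_le_card_nsmul _ _ _ fun p hp => X_mul_X_le_of_mem_antidiagonal hU hp
    _ = (n + 1) * (2 * (X s * X (n + s))) := by rw [Nat.card_antidiagonal, smul_eq_mul]

theorem convX_three_le {n : ℕ} (hU : ∀ k, 2 * k + 2 ≤ n + 8 → X (k + 1) ≤ (2 * k + 4) * X k) :
    convX 3 (n + 2) ≤ 68 * X (n + 5) := by
  have hfour : convX 4 n ≤ (n + 1) * (2 * (X 4 * X (n + 4))) := convX_le hU
  have hstep := two_mul_mul_X_le_X_succ (n + 4)
  rw [X_four] at hfour
  rw [convX_add_two, X_three, show n + 3 + 2 = n + 5 by ring]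
  nlinarith

theorem X_add_eight_le_of {n : ℕ}
    (hU : ∀ k, 2 * k + 2 ≤ n + 8 → X (k + 1) ≤ (2 * k + 4) * X k) :
    X (n + 8) ≤ (2 * n + 15) * X (n + 7) + 34 * X (n + 6) := by
  have hrec := two_mul_X_add_four (n + 4)
  have hsplit := convX_add_two 2 (n + 2)
  rw [X_two, show n + 2 + 2 + 2 = n + 6 by ring] at hsplit
  have hthree := convX_three_le hU
  have h5 := two_mul_mul_X_le_X_succ (n + 5)
  have h6 := two_mul_mul_X_le_X_succ (n + 6)
  rw [show n + 4 + 4 = n + 8 by ring, show n + 4 + 3 = n + 7 by ring, hsplit] at hrec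
  nlinarith

theorem X_succ_le (n : ℕ) : X (n + 1) ≤ (2 * n + 4) * X n := by
  induction n using Nat.strong_induction_on with
  | _ n ih =>
    by_cases hn : n ≤ 6
    · interval_cases n <;> simp [X_add_two, X, sum_Icc_succ_top]
    obtain ⟨m, rfl⟩ : ∃ m, n = m + 7 := ⟨n - 7, by omega⟩
    have h := X_add_eight_le_of (n := m) fun k hk => ih k (by omega)
    have h6 := two_mul_mul_X_le_X_succ (m + 6)
    nlinarith

theorem X_add_eight_le (n : ℕ) : X (n + 8) ≤ (2 * n + 15) * X (n + 7) + 34 * X (n + 6) :=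
  X_add_eight_le_of fun k _ => X_succ_le k

noncomputable def normalizedX (n : ℕ) : ℝ := X n / Nat.doubleFactorial (2 * n - 1)

theorem normalizedX_mul_doubleFactorial (n : ℕ) :
    normalizedX n * Nat.doubleFactorial (2 * n - 1) = X n :=
  div_mul_cancel₀ _ (by positivity)

theorem normalizedX_succ_mul_doubleFactorial (n : ℕ) :
    normalizedX (n + 1) * ((2 * n + 1) * Nat.doubleFactorial (2 * n - 1)) = X (n + 1) := by
  rw [← normalizedX_mul_doubleFactorial, doubleFactorial_two_mul_succ_sub_one]; push_cast; ring

theorem normalizedX_pos (n : ℕ) : 0 < normalizedX n :=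
  div_pos (by exact_mod_cast X_pos n) (by positivity)

theorem normalizedX_le_succ {n : ℕ} (hn : 5 ≤ n) : normalizedX n ≤ normalizedX (n + 1) := by
  have hX : ((2 * n + 1) * X n : ℝ) ≤ X (n + 1) := by
    exact_mod_cast two_mul_add_one_mul_X_le_X_succ hn
  rw [← normalizedX_mul_doubleFactorial, ← normalizedX_succ_mul_doubleFactorial] at hX
  have hD : (0 : ℝ) < (2 * n + 1) * Nat.doubleFactorial (2 * n - 1) := by positivity
  exact le_of_mul_le_mul_right (by linarith) hD

theorem normalizedX_succ_le {n : ℕ} (hn : 7 ≤ n) :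
    normalizedX (n + 1) ≤ (1 + 34 / (n : ℝ) ^ 2) * normalizedX n := by
  obtain ⟨m, rfl⟩ : ∃ m, n = m + 6 + 1 := ⟨n - 7, by omega⟩
  have hD : (0 : ℝ) < Nat.doubleFactorial (2 * (m + 6) - 1) := by positivity
  have hX : (X (m + 8) : ℝ) ≤ (2 * m + 15) * X (m + 7) + 34 * X (m + 6) := by
    exact_mod_cast X_add_eight_le m
  have h6 := normalizedX_mul_doubleFactorial (m + 6)
  have h7 := normalizedX_succ_mul_doubleFactorial (m + 6)
  have h8 := normalizedX_succ_mul_doubleFactorial (m + 6 + 1)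
  rw [doubleFactorial_two_mul_succ_sub_one] at h8
  have hmono := normalizedX_le_succ (n := m + 6) (by omega)
  have hpos := normalizedX_pos (m + 6)
  set a6 := normalizedX (m + 6)
  set a7 := normalizedX (m + 6 + 1)
  set a8 := normalizedX (m + 6 + 1 + 1)
  push_cast at h6 h7 h8 hX
  rw [← h6, ← h7, ← h8] at hX
  set P : ℝ := (2 * (m + 6 + 1 : ℝ) + 1) * (2 * (m + 6 : ℝ) + 1)
  have hP : ((m + 6 + 1 : ℕ) : ℝ) ^ 2 ≤ P := by push_cast; nlinarith
  have hsq : (0 : ℝ) < ((m + 6 + 1 : ℕ) : ℝ) ^ 2 := by positivity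
  have hrec : a8 * P ≤ a7 * P + 34 * a6 := le_of_mul_le_mul_right (by linarith) hD
  have ha7 : 0 ≤ a7 := hpos.le.trans hmono
  calc a8 ≤ a7 + 34 * a6 / P := by
        rw [← sub_le_iff_le_add', le_div_iff₀ (hsq.trans_le hP)]; linarith
    _ ≤ a7 + 34 * a7 / ((m + 6 + 1 : ℕ) : ℝ) ^ 2 := by gcongr
    _ = (1 + 34 / ((m + 6 + 1 : ℕ) : ℝ) ^ 2) * a7 := by ring

theorem exists_forall_ge_normalizedX_le : ∃ B, ∀ n ≥ 7, normalizedX n ≤ B := by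
  have hsum : Summable fun n : ℕ => 34 / (n : ℝ) ^ 2 := by
    simpa only [mul_one_div] using (Real.summable_one_div_nat_pow.2 one_lt_two).mul_left 34
  exact ⟨_, le_mul_exp_tsum_of_le_one_add_mul hsum (fun n => by positivity)
    (normalizedX_pos 7).le fun n hn => normalizedX_succ_le hn⟩

/-- The sequence `X_n/(2n-1)!!` converges to a limit `C`, and `C > 0`. -/
theorem X_div_doubleFactorial_converges_pos :
    ∃ C : ℝ, Filter.Tendsto
        (fun n : ℕ => (X n : ℝ) / (Nat.doubleFactorial (2 * n - 1) : ℝ))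
        Filter.atTop (nhds C) ∧ 0 < C := by
  obtain ⟨B, hB⟩ := exists_forall_ge_normalizedX_le
  have hmono : Monotone fun k => normalizedX (k + 7) :=
    monotone_nat_of_le_succ fun k => normalizedX_le_succ (by omega)
  have hbdd : BddAbove (Set.range fun k => normalizedX (k + 7)) :=
    ⟨B, Set.forall_mem_range.2 fun k => hB (k + 7) (by omega)⟩
  exact ⟨⨆ k, normalizedX (k + 7),
    (Filter.tendsto_add_atTop_iff_nat 7).1 (tendsto_atTop_ciSup hmono hbdd),
    (normalizedX_pos 7).trans_le (le_ciSup hbdd 0)⟩
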